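/- For the appendix parameters m = g = 1, M = 2, γ = 8/3, μ = 4√5/9, G = 2(81+√5)/149 and Bloch wavenumber β with cos β = (2√5 - 4)/9, the 4×4 Bloch matrix 𝒯(β) has exactly the two eigenvalues -1 - i and 1 - i, each with algebraic multiplicity 2 and geometric multiplicity 1 (hence both are defective). -/

import Mathlib

open Polynomial

/-- The Bloch matrix `𝒯(β) = D·K(β)` of the appendix, with parameters
`m = g = 1`, `M = 2`, `γ = 8/3`, `μ = 4√5/9`, `G = 2(81+√5)/149` and
`cos β = (2√5-4)/9`. -/
noncomputable def blochT : Matrix (Fin 4) (Fin 4) ℂ :=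
  let mu : ℂ := 4 * ((Real.sqrt 5 : ℝ) : ℂ) / 9
  let Gc : ℂ := 2 * (81 + ((Real.sqrt 5 : ℝ) : ℂ)) / 149
  let cb : ℂ := (2 * ((Real.sqrt 5 : ℝ) : ℂ) - 4) / 9
  let gam : ℂ := 8 / 3
  !![0, 0, 1, 0;
     0, 0, 0, 1;
     2 * 1 * (1 - cb) + mu, -mu, -Complex.I * gam, 0;
     (-mu) / 2, (2 * Gc * (1 - cb) + mu) / 2, 0, (-Complex.I * gam) / 2]

local notation "S" => (((Real.sqrt 5 : ℝ) : ℂ))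

lemma hs5 : (S)^2 = 5 := by
  norm_cast
  rw [Real.sq_sqrt]; norm_num

lemma ker_neg : Module.finrank ℂ
    (LinearMap.ker (Matrix.toLin'
      ((-1 - Complex.I) • (1 : Matrix (Fin 4) (Fin 4) ℂ) - blochT))) = 1 := by
  have hker : LinearMap.ker (Matrix.toLin'
      ((-1 - Complex.I) • (1 : Matrix (Fin 4) (Fin 4) ℂ) - blochT)) =
      Submodule.span ℂ {![(1/5)*S + (-3/5)*S*Complex.I, 1,
        (-1 - Complex.I) * ((1/5)*S + (-3/5)*S*Complex.I), -1 - Complex.I]} := by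
    apply le_antisymm
    · intro x hx
      rw [LinearMap.mem_ker, Matrix.toLin'_apply] at hx
      have e0 := congrFun hx 0
      have e1 := congrFun hx 1
      have e2 := congrFun hx 2
      have e3 := congrFun hx 3
      simp [Matrix.mulVec, dotProduct, Fin.sum_univ_four, blochT,
        Matrix.sub_apply, Matrix.smul_apply, Matrix.one_apply] at e0 e1 e2 e3
      rw [Submodule.mem_span_singleton]
      refine ⟨x 1, funext fun i => ?_⟩
      fin_cases i <;> simp
      · linear_combination ((9/5:ℂ) + (21/10:ℂ)*Complex.I) * e0 +
          ((9/20:ℂ) + (-27/20:ℂ)*Complex.I) * e2 +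
          ((9/4:ℂ)*(x 2) + (21/10:ℂ)*(x 0)) * Complex.I_sq
      · linear_combination ((13/10:ℂ) + (-39/10:ℂ)*Complex.I) * e0 +
          ((-9/5:ℂ) + (9/10:ℂ)*Complex.I) * e2 +
          ((-3/2:ℂ)*(x 2) + (-39/10:ℂ)*(x 0) + (3/5:ℂ)*S*(x 1)) * Complex.I_sq
      · linear_combination e1
    · rw [Submodule.span_le, Set.singleton_subset_iff, SetLike.mem_coe,
        LinearMap.mem_ker, Matrix.toLin'_apply]
      funext i
      fin_cases i <;>
        simp [Matrix.mulVec, dotProduct, Fin.sum_univ_four, blochT,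
          Matrix.sub_apply, Matrix.smul_apply, Matrix.one_apply]
      · ring
      · linear_combination ((1/15:ℂ)*S + S*Complex.I) * Complex.I_sq
      · linear_combination ((-1/3:ℂ)) * Complex.I_sq +
          ((106/2235:ℂ) + (-2/15:ℂ)*Complex.I) * hs5
  rw [hker]
  refine finrank_span_singleton fun h => ?_
  have := congrFun h 1
  simp at this

lemma ker_pos : Module.finrank ℂ
    (LinearMap.ker (Matrix.toLin'
      ((1 - Complex.I) • (1 : Matrix (Fin 4) (Fin 4) ℂ) - blochT))) = 1 := by
  have hker : LinearMap.ker (Matrix.toLin'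
      ((1 - Complex.I) • (1 : Matrix (Fin 4) (Fin 4) ℂ) - blochT)) =
      Submodule.span ℂ {![(1/5)*S + (3/5)*S*Complex.I, 1,
        (1 - Complex.I) * ((1/5)*S + (3/5)*S*Complex.I), 1 - Complex.I]} := by
    apply le_antisymm
    · intro x hx
      rw [LinearMap.mem_ker, Matrix.toLin'_apply] at hx
      have e0 := congrFun hx 0
      have e1 := congrFun hx 1
      have e2 := congrFun hx 2
      have e3 := congrFun hx 3
      simp [Matrix.mulVec, dotProduct, Fin.sum_univ_four, blochT,
        Matrix.sub_apply, Matrix.smul_apply, Matrix.one_apply] at e0 e1 e2 e3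
      rw [Submodule.mem_span_singleton]
      refine ⟨x 1, funext fun i => ?_⟩
      fin_cases i <;> simp
      · linear_combination ((-9/5:ℂ) + (21/10:ℂ)*Complex.I) * e0 +
          ((9/20:ℂ) + (27/20:ℂ)*Complex.I) * e2 +
          ((-9/4:ℂ)*(x 2) + (21/10:ℂ)*(x 0)) * Complex.I_sq
      · linear_combination ((13/10:ℂ) + (39/10:ℂ)*Complex.I) * e0 +
          ((9/5:ℂ) + (9/10:ℂ)*Complex.I) * e2 +
          ((-3/2:ℂ)*(x 2) + (39/10:ℂ)*(x 0) + (-3/5:ℂ)*S*(x 1)) * Complex.I_sq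
      · linear_combination e1
    · rw [Submodule.span_le, Set.singleton_subset_iff, SetLike.mem_coe,
        LinearMap.mem_ker, Matrix.toLin'_apply]
      funext i
      fin_cases i <;>
        simp [Matrix.mulVec, dotProduct, Fin.sum_univ_four, blochT,
          Matrix.sub_apply, Matrix.smul_apply, Matrix.one_apply]
      · linear_combination ((1/15:ℂ)*S + (-1:ℂ)*S*Complex.I) * Complex.I_sq
      · linear_combination ((-1/3:ℂ)) * Complex.I_sq +
          ((106/2235:ℂ) + (2/15:ℂ)*Complex.I) * hs5
  rw [hker]
  refine finrank_span_singleton fun h => ?_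
  have := congrFun h 1
  simp at this

lemma charpoly_eq : blochT.charpoly =
    (X - C (-1 - Complex.I)) ^ 2 * (X - C (1 - Complex.I)) ^ 2 := by
  apply Polynomial.funext
  intro z
  rw [Matrix.charpoly, ← Polynomial.coe_evalRingHom, RingHom.map_det]
  simp [Matrix.det_succ_row_zero, Fin.sum_univ_succ, blochT, Matrix.submatrix_apply,
    Matrix.charmatrix_apply_eq, Matrix.charmatrix_apply_ne, Fin.succ_zero_eq_one,
    Fin.succ_one_eq_two, show (Fin.succ 2 : Fin 4) = 3 from rfl, Fin.succAbove, Fin.castSucc, Fin.castAdd, Fin.castLE]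
  linear_combination ((4/1341 : ℂ)*z^2 + (32/4023)*Complex.I*z - 16/149) * hs5 + (-4*z*Complex.I - (22/9)*z^2 + 3 - Complex.I^2) * Complex.I_sq

/-- `𝒯(β)` has exactly the two eigenvalues `-1-i` and `1-i`, each of algebraic
multiplicity 2 and geometric multiplicity 1 (hence both defective). -/
theorem stmt17 :
    blochT.charpoly =
      (X - C (-1 - Complex.I)) ^ 2 * (X - C (1 - Complex.I)) ^ 2 ∧
    Module.finrank ℂ
      (LinearMap.ker (Matrix.toLin'
        ((-1 - Complex.I) • (1 : Matrix (Fin 4) (Fin 4) ℂ) - blochT))) = 1 ∧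
    Module.finrank ℂ
      (LinearMap.ker (Matrix.toLin'
        ((1 - Complex.I) • (1 : Matrix (Fin 4) (Fin 4) ℂ) - blochT))) = 1 := by
  exact ⟨charpoly_eq, ker_neg, ker_pos⟩
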